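/- Let (X,𝔄,P) be a complete probability space, φ a lower density on (X,𝔄,P), and suppose P(φ(E) ∪ φ(E^c)) = 1 for all E ∈ 𝔄. If σ is a lifting on (X,𝔄,P) with φ(E) ⊆ σ(E) for all E ∈ 𝔄, then the map π defined by π(E) := σ(φ(E)) satisfies π(E^c) = (π(E))^c for all E, and π is a lifting on (X,𝔄,P). -/

import Mathlib

/-! The sets `(φ E)ᶜ` and `φ Eᶜ` differ only inside the null set `(φ E ∪ φ Eᶜ)ᶜ`, since `φ E` and
`φ Eᶜ` are disjoint. A lifting `σ` does not see null differences and commutes with complements, so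
`σ (φ Eᶜ) = σ ((φ E)ᶜ) = (σ (φ E))ᶜ`; the remaining lifting axioms hold for the composite of any
two lower densities. -/

open MeasureTheory Set

/-- A lower density on the probability space given by `P`. -/
def IsLowerDensity {X : Type*} [MeasurableSpace X] (P : Measure X) (φ : Set X → Set X) : Prop :=
  (∀ E, MeasurableSet E → MeasurableSet (φ E) ∧ P (symmDiff E (φ E)) = 0) ∧
  (∀ E F, MeasurableSet E → MeasurableSet F → P (symmDiff E F) = 0 → φ E = φ F) ∧
  φ ∅ = ∅ ∧ φ Set.univ = Set.univ ∧
  (∀ E F, MeasurableSet E → MeasurableSet F → φ (E ∩ F) = φ E ∩ φ F)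

/-- A lifting: a lower density which also commutes with complements. -/
def IsLifting {X : Type*} [MeasurableSpace X] (P : Measure X) (σ : Set X → Set X) : Prop :=
  IsLowerDensity P σ ∧ ∀ E, MeasurableSet E → σ Eᶜ = (σ E)ᶜ

theorem Set.symmDiff_compl_left_of_disjoint {X : Type*} {A B : Set X} (h : Disjoint A B) :
    symmDiff Aᶜ B = (A ∪ B)ᶜ := by
  ext x
  have hAB : x ∈ A → x ∉ B := fun hA => Set.disjoint_left.1 h hA
  simp only [mem_symmDiff, mem_compl_iff, mem_union]
  tauto

namespace IsLowerDensity

variable {X : Type*} [MeasurableSpace X] {P : Measure X} {φ ψ : Set X → Set X}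

theorem measurableSet_apply (hφ : IsLowerDensity P φ) {E : Set X} (hE : MeasurableSet E) :
    MeasurableSet (φ E) :=
  (hφ.1 E hE).1

theorem measure_symmDiff_apply (hφ : IsLowerDensity P φ) {E : Set X} (hE : MeasurableSet E) :
    P (symmDiff E (φ E)) = 0 :=
  (hφ.1 E hE).2

theorem apply_eq_of_measure_symmDiff_eq_zero (hφ : IsLowerDensity P φ) {E F : Set X}
    (hE : MeasurableSet E) (hF : MeasurableSet F) (h : P (symmDiff E F) = 0) : φ E = φ F :=
  hφ.2.1 E F hE hF h

theorem apply_empty (hφ : IsLowerDensity P φ) : φ ∅ = ∅ :=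
  hφ.2.2.1

theorem apply_univ (hφ : IsLowerDensity P φ) : φ univ = univ :=
  hφ.2.2.2.1

theorem apply_inter (hφ : IsLowerDensity P φ) {E F : Set X} (hE : MeasurableSet E)
    (hF : MeasurableSet F) : φ (E ∩ F) = φ E ∩ φ F :=
  hφ.2.2.2.2 E F hE hF

theorem disjoint_apply_compl (hφ : IsLowerDensity P φ) {E : Set X} (hE : MeasurableSet E) :
    Disjoint (φ E) (φ Eᶜ) := by
  rw [Set.disjoint_iff_inter_eq_empty, ← hφ.apply_inter hE hE.compl, inter_compl_self,
    hφ.apply_empty]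

theorem comp (hψ : IsLowerDensity P ψ) (hφ : IsLowerDensity P φ) :
    IsLowerDensity P (ψ ∘ φ) := by
  refine ⟨fun E hE => ⟨hψ.measurableSet_apply (hφ.measurableSet_apply hE), ?_⟩,
    fun E F hE hF h => congrArg ψ (hφ.apply_eq_of_measure_symmDiff_eq_zero hE hF h), ?_, ?_,
    fun E F hE hF => ?_⟩
  · exact measure_mono_null (symmDiff_triangle E (φ E) (ψ (φ E)))
      (measure_union_null (hφ.measure_symmDiff_apply hE)
        (hψ.measure_symmDiff_apply (hφ.measurableSet_apply hE)))
  · simp only [Function.comp_apply, hφ.apply_empty, hψ.apply_empty]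
  · simp only [Function.comp_apply, hφ.apply_univ, hψ.apply_univ]
  · simp only [Function.comp_apply, hφ.apply_inter hE hF,
      hψ.apply_inter (hφ.measurableSet_apply hE) (hφ.measurableSet_apply hF)]

end IsLowerDensity

theorem IsLifting.apply_apply_compl {X : Type*} [MeasurableSpace X] {P : Measure X}
    {φ σ : Set X → Set X} (hσ : IsLifting P σ) (hφ : IsLowerDensity P φ) {E : Set X}
    (hE : MeasurableSet E) (hnull : P (φ E ∪ φ Eᶜ)ᶜ = 0) : σ (φ Eᶜ) = (σ (φ E))ᶜ := by
  have hφE := hφ.measurableSet_apply hE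
  have hcompl_ae : P (symmDiff (φ E)ᶜ (φ Eᶜ)) = 0 := by
    rwa [Set.symmDiff_compl_left_of_disjoint (hφ.disjoint_apply_compl hE)]
  rw [← hσ.2 _ hφE, hσ.1.apply_eq_of_measure_symmDiff_eq_zero hφE.compl
    (hφ.measurableSet_apply hE.compl) hcompl_ae]

theorem stmt7_general {X : Type*} [MeasurableSpace X] (P : Measure X)
    [IsProbabilityMeasure P]
    (φ : Set X → Set X) (hφ : IsLowerDensity P φ)
    (hcompl : ∀ E, MeasurableSet E → P (φ E ∪ φ Eᶜ) = 1)
    (σ : Set X → Set X) (hσ : IsLifting P σ) :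
    (∀ E, MeasurableSet E → σ (φ Eᶜ) = (σ (φ E))ᶜ) ∧
      IsLifting P (fun E => σ (φ E)) := by
  have hπ_compl : ∀ E, MeasurableSet E → σ (φ Eᶜ) = (σ (φ E))ᶜ := fun E hE =>
    hσ.apply_apply_compl hφ hE <| (prob_compl_eq_zero_iff <|
      (hφ.measurableSet_apply hE).union (hφ.measurableSet_apply hE.compl)).2 (hcompl E hE)
  exact ⟨hπ_compl, hσ.1.comp hφ, hπ_compl⟩

theorem stmt7 {X : Type*} [MeasurableSpace X] (P : Measure X)
    [IsProbabilityMeasure P] [P.IsComplete]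
    (φ : Set X → Set X) (hφ : IsLowerDensity P φ)
    (hcompl : ∀ E, MeasurableSet E → P (φ E ∪ φ Eᶜ) = 1)
    (σ : Set X → Set X) (hσ : IsLifting P σ)
    (hsub : ∀ E, MeasurableSet E → φ E ⊆ σ E) :
    (∀ E, MeasurableSet E → σ (φ Eᶜ) = (σ (φ E))ᶜ) ∧
      IsLifting P (fun E => σ (φ E)) :=
  stmt7_general P φ hφ hcompl σ hσ
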